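/- Symplectic Frobenius reciprocity: for X a Hamiltonian G-space and Y a Hamiltonian H-space (H ⊂ G closed), there is a natural bijection of sets Hom_G(X, Ind_H^G Y) ≅ Hom_H(Res_H^G X, Y), where Hom_G(X₁, X₂) := (X₁⁻ × X₂)//G is the zero-level set of the product momentum map modulo G. -/

import Mathlib

open Manifold Topology

noncomputable section

variable {E : Type*} [NormedAddCommGroup E] [NormedSpace ℝ E]
variable {F : Type*} [NormedAddCommGroup F] [NormedSpace ℝ F]
variable {G : Type*} [TopologicalSpace G] [ChartedSpace E G] [Group G] [LieGroup 𝓘(ℝ, E) (⊤ : ℕ∞) G]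
variable {H : Type*} [TopologicalSpace H] [ChartedSpace F H] [Group H] [LieGroup 𝓘(ℝ, F) (⊤ : ℕ∞) H]

/-- The adjoint representation, as the derivative of conjugation at the identity. -/
def Ad {E' : Type*} [NormedAddCommGroup E'] [NormedSpace ℝ E']
    {G' : Type*} [TopologicalSpace G'] [ChartedSpace E' G'] [Group G']
    [LieGroup 𝓘(ℝ, E') (⊤ : ℕ∞) G'] (g : G') : E' →L[ℝ] E' :=
  mfderiv 𝓘(ℝ, E') 𝓘(ℝ, E') (fun x => g * x * g⁻¹) (1 : G')

/-- The derivative at the identity of the inclusion `ι : H → G` of a closed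
subgroup, i.e. the inclusion `𝔥 → 𝔤` of Lie algebras. -/
def dHom (ι : H →* G) : F →L[ℝ] E :=
  mfderiv 𝓘(ℝ, F) 𝓘(ℝ, E) (ι : H → G) (1 : H)

variable {X : Type*} [MulAction G X] {Y : Type*} [MulAction H Y]
variable (ι : H →* G)

/-- `φ(p, y) = p q⁻¹` on `T*G × Y`, in the left trivialization `T*G ≅ G × 𝔤*`. -/
def phiMap (n : (G × (E →L[ℝ] ℝ)) × Y) : E →L[ℝ] ℝ := n.1.2.comp (Ad n.1.1⁻¹)

/-- `ψ(p, y) = Ψ(y) − (q⁻¹ p)|_𝔥` on `T*G × Y`, in the left trivialization. -/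
def psiMap (Ψ : Y → F →L[ℝ] ℝ) (n : (G × (E →L[ℝ] ℝ)) × Y) : F →L[ℝ] ℝ :=
  Ψ n.2 - n.1.2.comp (dHom ι)

/-- The zero level, inside `X⁻ × (T*G × Y)`, of the momentum map for the diagonal
`G`-action on `X⁻ × Ind_H^G Y` together with the `H`-momentum `ψ` defining
`Ind_H^G Y = ψ⁻¹(0)/H`; its quotient by `G × H` is `Hom_G(X, Ind_H^G Y)`. -/
def ZL (Φ : X → E →L[ℝ] ℝ) (Ψ : Y → F →L[ℝ] ℝ) : Set (X × (G × (E →L[ℝ] ℝ)) × Y) :=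
  {z | psiMap ι Ψ z.2 = 0 ∧ phiMap z.2 = Φ z.1}

/-- The `G × H`-orbit relation on the zero level `ZL`:
`g` acts diagonally on `X × T*G` and `h` by `(p, y) ↦ (p h⁻¹, h y)`. -/
def relL (Φ : X → E →L[ℝ] ℝ) (Ψ : Y → F →L[ℝ] ℝ) (z z' : ZL ι Φ Ψ) : Prop :=
  ∃ (g : G) (h : H),
    (z' : X × (G × (E →L[ℝ] ℝ)) × Y)
      = (g • (z : X × (G × (E →L[ℝ] ℝ)) × Y).1,
         (g * (z : X × (G × (E →L[ℝ] ℝ)) × Y).2.1.1 * (ι h)⁻¹,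
          (z : X × (G × (E →L[ℝ] ℝ)) × Y).2.1.2.comp (Ad ((ι h)⁻¹))),
         h • (z : X × (G × (E →L[ℝ] ℝ)) × Y).2.2)

/-- The zero level, inside `Res_H^G X⁻ × Y`, of the momentum map `Ψ − Φ|_𝔥`;
its quotient by `H` is `Hom_H(Res_H^G X, Y)`. -/
def ZR (Φ : X → E →L[ℝ] ℝ) (Ψ : Y → F →L[ℝ] ℝ) : Set (X × Y) :=
  {z | Ψ z.2 = (Φ z.1).comp (dHom ι)}

/-- The `H`-orbit relation on the zero level `ZR` (`H` acting on `X` through `ι`). -/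
def relR (Φ : X → E →L[ℝ] ℝ) (Ψ : Y → F →L[ℝ] ℝ) (z z' : ZR ι Φ Ψ) : Prop :=
  ∃ h : H, (z' : X × Y) = (ι h • (z : X × Y).1, h • (z : X × Y).2)

/-! Every `G × H`-orbit in the zero level `ZL` meets the slice `q = 1`: translating by `q⁻¹ ∈ G`
moves `(x, (q, p), y)` to `(q⁻¹ x, (1, p), y)`, and on the slice the equation `φ = Φ` forces
`p = Φ (q⁻¹ x)`, so that `ψ = 0` becomes `Ψ y = Φ (q⁻¹ x)|_𝔥`, the defining equation of `ZR`.
The elements of `G × H` preserving the slice are the pairs `(ι h, h)`, which act on it exactly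
as `H` acts on `Res_H^G X × Y`. -/

theorem Ad_one : Ad (1 : G) = ContinuousLinearMap.id ℝ E := by
  have conj_one : (fun x : G => 1 * x * 1⁻¹) = id := by funext x; simp
  rw [Ad, conj_one, mfderiv_id]
  rfl

theorem Ad_mul (g h : G) : (Ad (g * h) : E →L[ℝ] E) = (Ad g).comp (Ad h) := by
  have conj_mdifferentiable (k : G) :
      MDifferentiable 𝓘(ℝ, E) 𝓘(ℝ, E) (fun x : G => k * x * k⁻¹) :=
    have conj_smooth : ContMDiff 𝓘(ℝ, E) 𝓘(ℝ, E) (⊤ : ℕ∞) (fun x : G => k * x * k⁻¹) :=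
      (contMDiff_const.mul contMDiff_id).mul contMDiff_const
    conj_smooth.mdifferentiable (by simp)
  have conj_mul : (fun x : G => g * h * x * (g * h)⁻¹)
      = (fun x => g * x * g⁻¹) ∘ (fun x => h * x * h⁻¹) := by
    funext x; simp [mul_assoc]
  rw [Ad, conj_mul, mfderiv_comp _ (conj_mdifferentiable g _) (conj_mdifferentiable h _),
    mul_one, mul_inv_cancel]
  rfl

section Slice

variable {ι} {Φ : X → E →L[ℝ] ℝ} {Ψ : Y → F →L[ℝ] ℝ}

omit [LieGroup 𝓘(ℝ, F) (⊤ : ℕ∞) H]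

theorem momentum_inv_smul_eq
    (hΦ : ∀ (g : G) (x : X), Φ (g • x) = (Φ x).comp (Ad g⁻¹))
    {q : G} {p : E →L[ℝ] ℝ} {x : X} (h : p.comp (Ad q⁻¹) = Φ x) : Φ (q⁻¹ • x) = p := by
  rw [hΦ, inv_inv, ← h, ContinuousLinearMap.comp_assoc, ← Ad_mul, inv_mul_cancel, Ad_one,
    ContinuousLinearMap.comp_id]

def ZL.toZR (hΦ : ∀ (g : G) (x : X), Φ (g • x) = (Φ x).comp (Ad g⁻¹)) (z : ZL ι Φ Ψ) :
    ZR ι Φ Ψ :=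
  ⟨(z.1.2.1.1⁻¹ • z.1.1, z.1.2.2), by
    rw [ZR, Set.mem_ofPred_eq, momentum_inv_smul_eq hΦ z.2.2, ← sub_eq_zero]
    exact z.2.1⟩

def ZR.toZL (z : ZR ι Φ Ψ) : ZL ι Φ Ψ :=
  ⟨(z.1.1, (1, Φ z.1.1), z.1.2), sub_eq_zero.mpr z.2, by
    rw [phiMap, inv_one, Ad_one, ContinuousLinearMap.comp_id]⟩

theorem ZL.relR_toZR (hΦ : ∀ (g : G) (x : X), Φ (g • x) = (Φ x).comp (Ad g⁻¹))
    {z z' : ZL ι Φ Ψ} (hzz' : relL ι Φ Ψ z z') :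
    relR ι Φ Ψ (ZL.toZR hΦ z) (ZL.toZR hΦ z') := by
  obtain ⟨g, h, hz'⟩ := hzz'
  refine ⟨h, ?_⟩
  simp [ZL.toZR, hz', mul_smul]

theorem ZR.relL_toZL (hΦ : ∀ (g : G) (x : X), Φ (g • x) = (Φ x).comp (Ad g⁻¹))
    {z z' : ZR ι Φ Ψ} (hzz' : relR ι Φ Ψ z z') :
    relL ι Φ Ψ (ZR.toZL z) (ZR.toZL z') := by
  obtain ⟨h, hz'⟩ := hzz'
  refine ⟨ι h, h, ?_⟩
  simp [ZR.toZL, hz', hΦ]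

theorem ZL.relL_toZL_toZR (hΦ : ∀ (g : G) (x : X), Φ (g • x) = (Φ x).comp (Ad g⁻¹))
    (z : ZL ι Φ Ψ) : relL ι Φ Ψ (ZR.toZL (ZL.toZR hΦ z)) z := by
  refine ⟨z.1.2.1.1, 1, ?_⟩
  simp [ZR.toZL, ZL.toZR, momentum_inv_smul_eq hΦ z.2.2, Ad_one]

omit [MulAction H Y] in
theorem ZR.toZR_toZL (hΦ : ∀ (g : G) (x : X), Φ (g • x) = (Φ x).comp (Ad g⁻¹))
    (z : ZR ι Φ Ψ) : ZL.toZR hΦ (ZR.toZL z) = z :=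
  Subtype.ext (by simp [ZL.toZR, ZR.toZL])

variable (ι) in
def symplecticFrobeniusEquiv (hΦ : ∀ (g : G) (x : X), Φ (g • x) = (Φ x).comp (Ad g⁻¹)) :
    Quot (relL ι Φ Ψ) ≃ Quot (relR ι Φ Ψ) where
  toFun := Quot.map (ZL.toZR hΦ) fun _ _ => ZL.relR_toZR hΦ
  invFun := Quot.map ZR.toZL fun _ _ => ZR.relL_toZL hΦ
  left_inv := Quot.ind fun z => Quot.sound (ZL.relL_toZL_toZR hΦ z)
  right_inv := Quot.ind fun z => congrArg (Quot.mk _) (ZR.toZR_toZL hΦ z)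

end Slice

theorem symplectic_frobenius_reciprocity
    (Φ : X → E →L[ℝ] ℝ)
    (hΦ : ∀ (g : G) (x : X), Φ (g • x) = (Φ x).comp (Ad g⁻¹))
    (Ψ : Y → F →L[ℝ] ℝ) :
    Nonempty (Quot (relL ι Φ Ψ) ≃ Quot (relR ι Φ Ψ)) :=
  ⟨symplecticFrobeniusEquiv ι hΦ⟩
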